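/- arXiv:1901.01629 — 3 statements merged into one kernel-verified Lean document; each statement's English description precedes it below -/
import Mathlib

section
/- One-dimensional divergence formula: Let f ∈ C²(ℝ/ℤ, ℝ) be nondegenerate (f and f' have no common zero) and let F ∈ C¹(ℝ,ℝ) with F(x) → ±1 as x → ±∞. If (F ∘ (f'/f))' ∈ L¹(ℝ/ℤ), then the number of zeros of f equals −(1/2) ∫_{ℝ/ℤ} (F ∘ (f'/f))'(t) dt. -/
open Set Filter MeasureTheory intervalIntegral
open scoped Topology



section Aux
variable {f : ℝ → ℝ}

lemma odf_deriv_contDiff (hf : ContDiff ℝ 2 f) : ContDiff ℝ 1 (deriv f) := by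
  have : (2 : WithTop ℕ∞) = 1 + 1 := by norm_num
  exact (contDiff_succ_iff_deriv.mp (this ▸ hf)).2.2

lemma odf_periodic_deriv {H : ℝ → ℝ} (h : Function.Periodic H 1) :
    Function.Periodic (deriv H) 1 := by
  intro x
  have h1 : deriv (fun y => H (y + 1)) x = deriv H (x + 1) := deriv_comp_add_const H 1 x
  rw [← h1]; congr 1; ext y; exact h y

/-- Zeros are isolated. -/
lemma odf_isolated (hf : ContDiff ℝ 2 f) (hnd : ∀ t, f t = 0 → deriv f t ≠ 0)
    {x : ℝ} (hx : f x = 0) : ∀ᶠ y in 𝓝[≠] x, f y ≠ 0 := by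
  have hd : HasDerivAt f (deriv f x) x :=
    ((hf.differentiable (by norm_num)) x).hasDerivAt
  have hs : Tendsto (slope f x) (𝓝[≠] x) (𝓝 (deriv f x)) :=
    hasDerivAt_iff_tendsto_slope.mp hd
  have hne := hnd x hx
  have : ∀ᶠ y in 𝓝[≠] x, slope f x y ≠ 0 :=
    hs (isOpen_compl_singleton.mem_nhds hne)
  filter_upwards [this, self_mem_nhdsWithin] with y hy hy'
  intro h0
  apply hy
  simp [slope_def_field, h0, hx]

/-- Finiteness of the zero set in a compact interval. -/
lemma odf_finite (hf : ContDiff ℝ 2 f) (hnd : ∀ t, f t = 0 → deriv f t ≠ 0)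
    (a b : ℝ) : {t | t ∈ Set.Icc a b ∧ f t = 0}.Finite := by
  by_contra hinf
  rw [← Set.not_infinite, not_not] at hinf
  obtain ⟨x, -, hacc⟩ := hinf.exists_accPt_of_subset_isCompact isCompact_Icc
    (fun t ht => ht.1)
  have hxz : f x = 0 := by
    have hcl : x ∈ closure {t | t ∈ Set.Icc a b ∧ f t = 0} :=
      mem_closure_iff_clusterPt.mpr (hacc.clusterPt)
    have hclosed : IsClosed {t : ℝ | t ∈ Set.Icc a b ∧ f t = 0} := by
      have : {t : ℝ | t ∈ Set.Icc a b ∧ f t = 0} = Set.Icc a b ∩ f ⁻¹' {0} := by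
        ext t; exact Iff.rfl
      rw [this]
      exact isClosed_Icc.inter (isClosed_eq (hf.continuous) continuous_const)
    exact ((hclosed.closure_eq ▸ hcl) : _).2
  have hiso := odf_isolated hf hnd hxz
  rw [AccPt] at hacc
  have : {y | f y ≠ 0} ∩ {t | t ∈ Set.Icc a b ∧ f t = 0} = ∅ := by
    ext y; simp only [Set.mem_inter_iff, Set.mem_setOf_eq, Set.mem_empty_iff_false]
    tauto
  exact hacc.ne (by
    rw [← Filter.empty_mem_iff_bot]
    rw [← this]
    exact Filter.inter_mem (Filter.mem_inf_of_left hiso)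
      (Filter.mem_inf_of_right (Filter.mem_principal_self _)))

/-- `f'/f → +∞` from the right of a nondegenerate zero. -/
lemma odf_tendsto_right (hf : ContDiff ℝ 2 f) (hnd : ∀ t, f t = 0 → deriv f t ≠ 0)
    {x : ℝ} (hx : f x = 0) :
    Tendsto (fun s => deriv f s / f s) (𝓝[>] x) atTop := by
  have hd : HasDerivAt f (deriv f x) x :=
    ((hf.differentiable (by norm_num)) x).hasDerivAt
  have hs : Tendsto (slope f x) (𝓝[≠] x) (𝓝 (deriv f x)) :=
    hasDerivAt_iff_tendsto_slope.mp hd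
  have hne := hnd x hx
  have hcont : Tendsto (deriv f) (𝓝[≠] x) (𝓝 (deriv f x)) :=
    ((odf_deriv_contDiff hf).continuous.tendsto x).mono_left nhdsWithin_le_nhds
  have hratio : Tendsto (fun s => deriv f s / slope f x s) (𝓝[≠] x) (𝓝 1) := by
    have := hcont.div hs hne
    rwa [div_self hne] at this
  have hmono : (𝓝[>] x) ≤ (𝓝[≠] x) := nhdsWithin_mono _ (fun y hy => ne_of_gt hy)
  have hinv : Tendsto (fun s => (s - x)⁻¹) (𝓝[>] x) atTop := by
    apply tendsto_inv_nhdsGT_zero.comp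
    rw [tendsto_nhdsWithin_iff]
    constructor
    · have : Tendsto (fun s => s - x) (𝓝 x) (𝓝 (x - x)) :=
        (continuous_id.sub continuous_const).tendsto x
      rw [sub_self] at this
      exact this.mono_left nhdsWithin_le_nhds
    · filter_upwards [self_mem_nhdsWithin] with s hs
      exact sub_pos.mpr (Set.mem_Ioi.mp hs)
  have hprod : Tendsto (fun s => (deriv f s / slope f x s) * (s - x)⁻¹) (𝓝[>] x) atTop :=
    Filter.Tendsto.pos_mul_atTop one_pos (hratio.mono_left hmono) hinv
  apply hprod.congr'
  filter_upwards [self_mem_nhdsWithin] with s hs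
  have hsx : s - x ≠ 0 := sub_ne_zero.mpr (ne_of_gt hs)
  rw [slope_def_field, hx, sub_zero]
  field_simp

/-- `f'/f → -∞` from the left of a nondegenerate zero. -/
lemma odf_tendsto_left (hf : ContDiff ℝ 2 f) (hnd : ∀ t, f t = 0 → deriv f t ≠ 0)
    {x : ℝ} (hx : f x = 0) :
    Tendsto (fun s => deriv f s / f s) (𝓝[<] x) atBot := by
  have hd : HasDerivAt f (deriv f x) x :=
    ((hf.differentiable (by norm_num)) x).hasDerivAt
  have hs : Tendsto (slope f x) (𝓝[≠] x) (𝓝 (deriv f x)) :=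
    hasDerivAt_iff_tendsto_slope.mp hd
  have hne := hnd x hx
  have hcont : Tendsto (deriv f) (𝓝[≠] x) (𝓝 (deriv f x)) :=
    ((odf_deriv_contDiff hf).continuous.tendsto x).mono_left nhdsWithin_le_nhds
  have hratio : Tendsto (fun s => deriv f s / slope f x s) (𝓝[≠] x) (𝓝 1) := by
    have := hcont.div hs hne
    rwa [div_self hne] at this
  have hmono : (𝓝[<] x) ≤ (𝓝[≠] x) := nhdsWithin_mono _ (fun y hy => ne_of_lt hy)
  have hinv : Tendsto (fun s => (s - x)⁻¹) (𝓝[<] x) atBot := by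
    have h1 : Tendsto (fun s => (x - s)⁻¹) (𝓝[<] x) atTop := by
      apply tendsto_inv_nhdsGT_zero.comp
      rw [tendsto_nhdsWithin_iff]
      constructor
      · have : Tendsto (fun s => x - s) (𝓝 x) (𝓝 (x - x)) :=
          (continuous_const.sub continuous_id).tendsto x
        rw [sub_self] at this
        exact this.mono_left nhdsWithin_le_nhds
      · filter_upwards [self_mem_nhdsWithin] with s hs
        exact sub_pos.mpr (Set.mem_Iio.mp hs)
    have h2 := tendsto_neg_atTop_atBot.comp h1
    apply h2.congr
    intro s
    simp [Function.comp, neg_inv, neg_sub]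
  have hprod : Tendsto (fun s => (s - x)⁻¹ * (deriv f s / slope f x s)) (𝓝[<] x) atBot :=
    Filter.Tendsto.atBot_mul_pos one_pos hinv (hratio.mono_left hmono)
  apply hprod.congr'
  filter_upwards [self_mem_nhdsWithin] with s hs
  have hsx : s - x ≠ 0 := sub_ne_zero.mpr (ne_of_lt hs)
  rw [slope_def_field, hx, sub_zero]
  field_simp

/-- Differentiability of `F ∘ (f'/f)` away from zeros of `f`. -/
lemma odf_diff (hf : ContDiff ℝ 2 f) {F : ℝ → ℝ} (hF : ContDiff ℝ 1 F)
    {s : ℝ} (hs : f s ≠ 0) :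
    DifferentiableAt ℝ (fun u => F (deriv f u / f u)) s := by
  have h1 : DifferentiableAt ℝ (fun u => deriv f u / f u) s :=
    ((odf_deriv_contDiff hf).differentiable (by norm_num) s).div
      ((hf.differentiable (by norm_num)) s) hs
  exact ((hF.differentiable (by norm_num)) _).comp s h1

/-- FTC on a single interval between consecutive zeros. -/
lemma odf_piece (hf : ContDiff ℝ 2 f) (hnd : ∀ t, f t = 0 → deriv f t ≠ 0)
    {F : ℝ → ℝ} (hF : ContDiff ℝ 1 F)
    (hFtop : Tendsto F atTop (𝓝 1)) (hFbot : Tendsto F atBot (𝓝 (-1)))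
    {a b : ℝ} (hab : a < b) (ha : f a = 0) (hb : f b = 0)
    (hmid : ∀ s ∈ Ioo a b, f s ≠ 0)
    (hi : IntervalIntegrable (deriv fun s => F (deriv f s / f s)) volume a b) :
    ∫ t in a..b, deriv (fun s => F (deriv f s / f s)) t = -2 := by
  have hderiv : ∀ x ∈ Ioo a b, HasDerivAt (fun s => F (deriv f s / f s))
      (deriv (fun s => F (deriv f s / f s)) x) x :=
    fun x hx => (odf_diff hf hF (hmid x hx)).hasDerivAt
  have hta : Tendsto (fun s => F (deriv f s / f s)) (𝓝[>] a) (𝓝 1) :=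
    hFtop.comp (odf_tendsto_right hf hnd ha)
  have htb : Tendsto (fun s => F (deriv f s / f s)) (𝓝[<] b) (𝓝 (-1)) :=
    hFbot.comp (odf_tendsto_left hf hnd hb)
  have := intervalIntegral.integral_eq_sub_of_hasDerivAt_of_tendsto hab hderiv hi hta htb
  rw [this]; norm_num

end Aux

/-- A 1-periodic function integrable on `[0,1]` is interval integrable everywhere. -/
lemma odf_per_integrable {g : ℝ → ℝ} (hg : Function.Periodic g 1)
    (h01 : IntervalIntegrable g volume 0 1) (u v : ℝ) :
    IntervalIntegrable g volume u v := by
  have hshift : ∀ m : ℤ, IntervalIntegrable g volume m (m + 1) := by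
    intro m
    have := h01.comp_add_right (-(m : ℝ))
    have heq : (fun x => g (x + -(m : ℝ))) = g := by
      ext x
      have := hg.sub_int_mul_eq (x := x) (n := m)
      simpa [sub_eq_add_neg] using this
    rw [heq] at this
    have e1 : (0 : ℝ) - -(m:ℝ) = (m:ℝ) := by ring
    have e2 : (1 : ℝ) - -(m:ℝ) = (m:ℝ) + 1 := by ring
    rwa [e1, e2] at this
  have hnat : ∀ n : ℕ, IntervalIntegrable g volume (-(n:ℝ)) n := by
    intro n
    induction n with
    | zero => simp
    | succ k ih =>
      have h1 : IntervalIntegrable g volume (-(k:ℝ) - 1) (-(k:ℝ)) := by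
        have := hshift (-(k:ℤ) - 1)
        have e1 : ((-(k:ℤ) - 1 : ℤ) : ℝ) = -(k:ℝ) - 1 := by push_cast; ring
        have e2 : ((-(k:ℤ) - 1 : ℤ) : ℝ) + 1 = -(k:ℝ) := by push_cast; ring
        rw [e1] at this
        have e3 : -(k:ℝ) - 1 + 1 = -(k:ℝ) := by ring
        rwa [e3] at this
      have h2 : IntervalIntegrable g volume (k:ℝ) ((k:ℝ) + 1) := by
        have := hshift (k:ℤ); push_cast at this; exact this
      have h3 := (h1.trans ih).trans h2
      have e1 : -((k:ℝ) + 1) = -(k:ℝ) - 1 := by ring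
      push_cast
      rw [e1]
      exact h3
  obtain ⟨n, hn⟩ := exists_nat_gt (max |u| |v|)
  apply (hnat n).mono_set
  have hu : u ∈ Icc (-(n:ℝ)) n := by
    constructor
    · have := (abs_le.mp (le_of_lt (lt_of_le_of_lt (le_max_left |u| |v|) hn))).1; linarith
    · have := (abs_le.mp (le_of_lt (lt_of_le_of_lt (le_max_left |u| |v|) hn))).2; linarith
  have hv : v ∈ Icc (-(n:ℝ)) n := by
    constructor
    · have := (abs_le.mp (le_of_lt (lt_of_le_of_lt (le_max_right |u| |v|) hn))).1; linarith
    · have := (abs_le.mp (le_of_lt (lt_of_le_of_lt (le_max_right |u| |v|) hn))).2; linarith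
  rw [Set.uIcc_of_le (by linarith [hu.1, hu.2] : (-(n:ℝ)) ≤ n)]
  exact Set.uIcc_subset_Icc hu hv

section Count
variable {f : ℝ → ℝ} {F : ℝ → ℝ}

lemma odf_count (hf : ContDiff ℝ 2 f) (hnd : ∀ t, f t = 0 → deriv f t ≠ 0)
    (hF : ContDiff ℝ 1 F) (hFtop : Tendsto F atTop (𝓝 1))
    (hFbot : Tendsto F atBot (𝓝 (-1)))
    (hintall : ∀ u v, IntervalIntegrable (deriv fun s => F (deriv f s / f s)) volume u v)
    (hfinall : ∀ u v : ℝ, {t | t ∈ Set.Icc u v ∧ f t = 0}.Finite)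
    (hpiece : ∀ a b : ℝ, a < b → f a = 0 → f b = 0 → (∀ s ∈ Ioo a b, f s ≠ 0) →
      ∫ t in a..b, deriv (fun s => F (deriv f s / f s)) t = -2) :
    ∀ n : ℕ, ∀ a b : ℝ, a < b → f a = 0 → f b = 0 →
      {t | t ∈ Set.Ico a b ∧ f t = 0}.ncard = n →
      ∫ t in a..b, deriv (fun s => F (deriv f s / f s)) t = -2 * n := by
  intro n
  induction n using Nat.strong_induction_on with
  | _ n ih =>
    intro a b hab ha hb hcard
    have hfin : {t | t ∈ Set.Ico a b ∧ f t = 0}.Finite :=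
      (hfinall a b).subset (fun t ht => ⟨Set.Ico_subset_Icc_self ht.1, ht.2⟩)
    by_cases hmid : ∀ s ∈ Ioo a b, f s ≠ 0
    · have hset : {t | t ∈ Set.Ico a b ∧ f t = 0} = {a} := by
        ext t
        simp only [Set.mem_setOf_eq, Set.mem_singleton_iff, Set.mem_Ico]
        constructor
        · rintro ⟨⟨h1, h2⟩, h3⟩
          by_contra hne
          exact hmid t ⟨lt_of_le_of_ne h1 (Ne.symm hne), h2⟩ h3
        · intro h
          rw [h]
          exact ⟨⟨le_refl a, hab⟩, ha⟩
      rw [hset, Set.ncard_singleton] at hcard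
      rw [hpiece a b hab ha hb hmid, ← hcard]
      norm_num
    · push_neg at hmid
      obtain ⟨c, hc, hcz⟩ := hmid
      set S1 := {t | t ∈ Set.Ico a c ∧ f t = 0} with hS1
      set S2 := {t | t ∈ Set.Ico c b ∧ f t = 0} with hS2
      have hfin1 : S1.Finite :=
        (hfinall a c).subset (fun t ht => ⟨Set.Ico_subset_Icc_self ht.1, ht.2⟩)
      have hfin2 : S2.Finite :=
        (hfinall c b).subset (fun t ht => ⟨Set.Ico_subset_Icc_self ht.1, ht.2⟩)
      have hdisj : Disjoint S1 S2 := by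
        rw [Set.disjoint_left]
        rintro t ⟨⟨_, h2⟩, _⟩ ⟨⟨h3, _⟩, _⟩
        exact absurd h3 (not_le.mpr h2)
      have hunion : {t | t ∈ Set.Ico a b ∧ f t = 0} = S1 ∪ S2 := by
        ext t
        simp only [hS1, hS2, Set.mem_setOf_eq, Set.mem_union, Set.mem_Ico]
        constructor
        · rintro ⟨⟨h1, h2⟩, h3⟩
          rcases lt_or_ge t c with h | h
          · exact Or.inl ⟨⟨h1, h⟩, h3⟩
          · exact Or.inr ⟨⟨h, h2⟩, h3⟩
        · rintro (⟨⟨h1, h2⟩, h3⟩ | ⟨⟨h1, h2⟩, h3⟩)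
          · exact ⟨⟨h1, h2.trans hc.2⟩, h3⟩
          · exact ⟨⟨hc.1.le.trans h1, h2⟩, h3⟩
      have hcard' : S1.ncard + S2.ncard = n := by
        rw [← hcard, hunion, Set.ncard_union_eq hdisj hfin1 hfin2]
      have hn1 : 0 < S1.ncard :=
        Set.ncard_pos hfin1 |>.mpr ⟨a, ⟨⟨le_refl a, hc.1⟩, ha⟩⟩
      have hn2 : 0 < S2.ncard :=
        Set.ncard_pos hfin2 |>.mpr ⟨c, ⟨⟨le_refl c, hc.2⟩, hcz⟩⟩
      have hi1 := ih S1.ncard (by omega) a c hc.1 ha hcz rfl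
      have hi2 := ih S2.ncard (by omega) c b hc.2 hcz hb rfl
      have hsum := intervalIntegral.integral_add_adjacent_intervals
        (hintall a c) (hintall c b)
      rw [← hsum, hi1, hi2, ← hcard']
      push_cast
      ring

end Count

lemma odf_shift {f : ℝ → ℝ} (hper : Function.Periodic f 1)
    (hfinall : ∀ u v : ℝ, {t | t ∈ Set.Icc u v ∧ f t = 0}.Finite)
    {a : ℝ} (ha0 : 0 ≤ a) (ha1 : a < 1) :
    {t | t ∈ Set.Ico a (a+1) ∧ f t = 0}.ncard = {t | t ∈ Set.Ico (0:ℝ) 1 ∧ f t = 0}.ncard := by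
  set S0 := {t | t ∈ Set.Ico (0:ℝ) 1 ∧ f t = 0} with hS0
  set A := S0 ∩ Set.Ici a with hA
  set B := S0 ∩ Set.Iio a with hB
  have hfin0 : S0.Finite :=
    (hfinall 0 1).subset (fun t ht => ⟨Set.Ico_subset_Icc_self ht.1, ht.2⟩)
  have hfinA : A.Finite := hfin0.subset Set.inter_subset_left
  have hfinB : B.Finite := hfin0.subset Set.inter_subset_left
  have hsplit : S0 = A ∪ B := by
    rw [hA, hB, ← Set.inter_union_distrib_left]
    rw [show Set.Ici a ∪ Set.Iio a = Set.univ from by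
      ext x; simp [le_or_gt a x, or_comm]]
    rw [Set.inter_univ]
  have hdisj : Disjoint A B := by
    rw [Set.disjoint_left]
    rintro t ht1 ht2
    have h1 : a ≤ t := ht1.2
    have h2 : t < a := ht2.2
    linarith
  have himg : {t | t ∈ Set.Ico a (a+1) ∧ f t = 0} = A ∪ ((fun t => t + 1) '' B) := by
    ext t
    simp only [hA, hB, hS0, Set.mem_setOf_eq, Set.mem_union, Set.mem_inter_iff,
      Set.mem_Ico, Set.mem_Ici, Set.mem_Iio, Set.mem_image]
    constructor
    · rintro ⟨⟨h1, h2⟩, h3⟩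
      rcases lt_or_ge t 1 with h | h
      · exact Or.inl ⟨⟨⟨ha0.trans h1, h⟩, h3⟩, h1⟩
      · refine Or.inr ⟨t - 1, ⟨⟨⟨by linarith, by linarith⟩, ?_⟩, by linarith⟩, by ring⟩
        have := hper (t - 1)
        rw [sub_add_cancel] at this
        rw [this] at h3
        exact h3
    · rintro (⟨⟨⟨h1, h2⟩, h3⟩, h4⟩ | ⟨s, ⟨⟨⟨h1, h2⟩, h3⟩, h4⟩, rfl⟩)
      · exact ⟨⟨h4, by linarith⟩, h3⟩
      · refine ⟨⟨by linarith, by linarith⟩, ?_⟩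
        rw [hper s]
        exact h3
  have hdisj2 : Disjoint A ((fun t => t + 1) '' B) := by
    rw [Set.disjoint_left]
    rintro t ht1 ht2
    obtain ⟨⟨⟨-, h1⟩, -⟩, -⟩ := ht1
    obtain ⟨s, ⟨⟨⟨h2, -⟩, -⟩, -⟩, rfl⟩ := ht2
    simp only at h1
    linarith
  rw [himg, hsplit]
  rw [Set.ncard_union_eq hdisj2 hfinA (hfinB.image _),
    Set.ncard_union_eq hdisj hfinA hfinB,
    Set.ncard_image_of_injective _ (add_left_injective 1)]

/-- One-dimensional divergence formula on the circle `ℝ/ℤ`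
(realized as 1-periodic functions on `ℝ`): the number of zeros of `f` in a period
equals `-(1/2) ∫₀¹ (F ∘ (f'/f))'`. -/
theorem one_dim_divergence_formula (f : ℝ → ℝ) (hper : Function.Periodic f 1)
    (hf : ContDiff ℝ 2 f) (hnd : ∀ t, f t = 0 → deriv f t ≠ 0)
    (F : ℝ → ℝ) (hF : ContDiff ℝ 1 F)
    (hFtop : Filter.Tendsto F Filter.atTop (nhds 1))
    (hFbot : Filter.Tendsto F Filter.atBot (nhds (-1)))
    (hint : IntervalIntegrable (deriv fun s => F (deriv f s / f s))
      MeasureTheory.volume 0 1) :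
    (Nat.card {t : ℝ | t ∈ Set.Ico (0:ℝ) 1 ∧ f t = 0} : ℝ) =
      -(1/2) * ∫ t in (0:ℝ)..1, deriv (fun s => F (deriv f s / f s)) t := by
  set h : ℝ → ℝ := fun s => F (deriv f s / f s) with hh
  have hperh : Function.Periodic h 1 := by
    intro s
    simp only [hh]
    rw [odf_periodic_deriv hper s, hper s]
  have hperh' : Function.Periodic (deriv h) 1 := odf_periodic_deriv hperh
  have hintall : ∀ u v, IntervalIntegrable (deriv h) volume u v :=
    odf_per_integrable hperh' hint
  have hfinall : ∀ u v : ℝ, {t | t ∈ Set.Icc u v ∧ f t = 0}.Finite :=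
    odf_finite hf hnd
  have hfin0 : {t | t ∈ Set.Ico (0:ℝ) 1 ∧ f t = 0}.Finite :=
    (hfinall 0 1).subset (fun t ht => ⟨Set.Ico_subset_Icc_self ht.1, ht.2⟩)
  rw [Nat.card_coe_set_eq]
  by_cases hS : {t : ℝ | t ∈ Set.Ico (0:ℝ) 1 ∧ f t = 0} = ∅
  · -- no zeros at all
    have hnozero : ∀ t, f t ≠ 0 := by
      intro t ht
      have hmem : Int.fract t ∈ Set.Ico (0:ℝ) 1 := ⟨Int.fract_nonneg t, Int.fract_lt_one t⟩
      have hfz : f (Int.fract t) = 0 := by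
        rw [Int.fract]
        have := hper.sub_int_mul_eq (x := t) (n := ⌊t⌋)
        rw [mul_one] at this
        rw [this]
        exact ht
      have : Int.fract t ∈ {t : ℝ | t ∈ Set.Ico (0:ℝ) 1 ∧ f t = 0} := ⟨hmem, hfz⟩
      rw [hS] at this
      exact this
    have hftc : ∫ t in (0:ℝ)..1, deriv h t = h 1 - h 0 :=
      intervalIntegral.integral_eq_sub_of_hasDerivAt
        (fun x _ => (odf_diff hf hF (hnozero x)).hasDerivAt) hint
    have h10 : h 1 = h 0 := by
      have := hperh 0
      rwa [zero_add] at this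
    rw [hS]
    simp only [Set.ncard_empty, Nat.cast_zero]
    rw [hftc, h10]
    ring
  · obtain ⟨a, haIco, ha⟩ : ∃ a, a ∈ Set.Ico (0:ℝ) 1 ∧ f a = 0 := by
      rcases Set.nonempty_iff_ne_empty.mpr hS with ⟨a, ha1, ha2⟩
      exact ⟨a, ha1, ha2⟩
    have hb : f (a + 1) = 0 := by rw [hper a]; exact ha
    have hpiece : ∀ u v : ℝ, u < v → f u = 0 → f v = 0 → (∀ s ∈ Set.Ioo u v, f s ≠ 0) →
        ∫ t in u..v, deriv h t = -2 := fun u v h1 h2 h3 h4 =>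
      odf_piece hf hnd hF hFtop hFbot h1 h2 h3 h4 (hintall u v)
    have hcount := odf_count hf hnd hF hFtop hFbot hintall hfinall hpiece
      ({t | t ∈ Set.Ico a (a+1) ∧ f t = 0}.ncard) a (a+1) (by linarith) ha hb rfl
    have hshift := odf_shift hper hfinall haIco.1 haIco.2
    have hper_int : ∫ t in a..(a+1), deriv h t = ∫ t in (0:ℝ)..1, deriv h t := by
      have := hperh'.intervalIntegral_add_eq a 0
      rwa [zero_add] at this
    rw [← hshift, ← hper_int, hcount]
    ring
end

section
/- One-dimensional algebraic zero-counting formula: Let f ∈ C²(ℝ/ℤ,ℝ) with f and f' having no common zero. Then the number of zeros of f equals (1/2)∫_{ℝ/ℤ} sign(f(t))·(f f'² + f'' f'² − (f² + f'²) f'')/(f² + f'²)^{3/2} dt. -/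
open Filter Asymptotics Set Topology

namespace ZCaux

noncomputable def q (f : ℝ → ℝ) (t : ℝ) : ℝ := f t ^ 2 + deriv f t ^ 2

noncomputable def h (f : ℝ → ℝ) (t : ℝ) : ℝ :=
  Real.sign (f t) * deriv f t / Real.sqrt (q f t)

noncomputable def w (z t : ℝ) : ℝ := if t < z then 0 else if t = z then 1 else 2

noncomputable def F (f : ℝ → ℝ) (t : ℝ) : ℝ :=
  Real.sign (f t) *
    (f t * (deriv f t) ^ 2 + deriv (deriv f) t * (deriv f t) ^ 2 -
      ((f t) ^ 2 + (deriv f t) ^ 2) * deriv (deriv f) t) /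
    ((f t) ^ 2 + (deriv f t) ^ 2) ^ ((3:ℝ)/2)

lemma sign_mul_self (x : ℝ) : Real.sign x * x = |x| := by
  rcases lt_trichotomy x 0 with hx | hx | hx
  · rw [Real.sign_of_neg hx, abs_of_neg hx]; ring
  · simp [hx]
  · rw [Real.sign_of_pos hx, abs_of_pos hx]; ring

lemma F_eq (f : ℝ → ℝ) (t : ℝ) :
    F f t = |f t| * ((deriv f t) ^ 2 - f t * deriv (deriv f) t) /
      ((f t) ^ 2 + (deriv f t) ^ 2) ^ ((3:ℝ)/2) := by
  unfold F
  rw [show f t * (deriv f t) ^ 2 + deriv (deriv f) t * (deriv f t) ^ 2 -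
      ((f t) ^ 2 + (deriv f t) ^ 2) * deriv (deriv f) t
      = f t * ((deriv f t) ^ 2 - f t * deriv (deriv f) t) by ring,
    ← mul_assoc, sign_mul_self]

lemma w_self (z : ℝ) : w z z = 1 := by simp [w]

set_option linter.unreachableTactic false in
set_option linter.unusedTactic false in
lemma w_sub (z : ℝ) : w z 1 - w z 0 =
    (if z ∈ Set.Ico (0:ℝ) 1 then 2 else 0) + (if z = 1 then 1 else 0)
      - (if z = 0 then 1 else 0) := by
  simp only [w]
  by_cases hI : z ∈ Set.Ico (0:ℝ) 1
  · rw [if_pos hI]; obtain ⟨hI1, hI2⟩ := hI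
    split_ifs <;> try ring1
    all_goals exfalso
    all_goals try linarith
    all_goals
      first
      | (have h0 : z = 0 := by linarith
         subst h0; simp_all)
      | (have h1 : z = 1 := by linarith
         subst h1; simp_all)
  · rw [if_neg hI]
    rw [Set.mem_Ico, not_and_or, not_le, not_lt] at hI
    rcases hI with hI | hI <;> split_ifs <;> try ring1
    all_goals exfalso
    all_goals try linarith
    all_goals
      first
      | (have h0 : z = 0 := by linarith
         subst h0; simp_all)
      | (have h1 : z = 1 := by linarith
         subst h1; simp_all)

end ZCaux

/-- One-dimensional algebraic zero-counting formula on the circle `ℝ/ℤ`. -/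
theorem one_dim_algebraic_formula (f : ℝ → ℝ) (hper : Function.Periodic f 1)
    (hf : ContDiff ℝ 2 f) (hnd : ∀ t, f t = 0 → deriv f t ≠ 0) :
    (Nat.card {t : ℝ | t ∈ Set.Ico (0:ℝ) 1 ∧ f t = 0} : ℝ) =
      (1/2) * ∫ t in (0:ℝ)..1,
        Real.sign (f t) *
          (f t * (deriv f t) ^ 2 + deriv (deriv f) t * (deriv f t) ^ 2 -
            ((f t) ^ 2 + (deriv f t) ^ 2) * deriv (deriv f) t) /
          ((f t) ^ 2 + (deriv f t) ^ 2) ^ ((3:ℝ)/2) := by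
  classical
  -- basic regularity facts
  have hf2 : ContDiff ℝ ((1:WithTop ℕ∞)+1) f := by exact_mod_cast hf
  have hfd : Differentiable ℝ f := (contDiff_succ_iff_deriv.mp hf2).1
  have hf1 : ContDiff ℝ 1 (deriv f) := (contDiff_succ_iff_deriv.mp hf2).2.2
  have hfd' : Differentiable ℝ (deriv f) := hf1.differentiable one_ne_zero
  have hcont : Continuous f := hfd.continuous
  have hcont' : Continuous (deriv f) := hfd'.continuous
  have hcont'' : Continuous (deriv (deriv f)) := hf1.continuous_deriv le_rfl
  have hQpos : ∀ t, 0 < ZCaux.q f t := by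
    intro t
    rcases eq_or_ne (f t) 0 with h0 | h0
    · have := hnd t h0; unfold ZCaux.q; positivity
    · unfold ZCaux.q; positivity
  have hSpos : ∀ t, 0 < Real.sqrt (ZCaux.q f t) := fun t => Real.sqrt_pos.2 (hQpos t)
  have hper' : ∀ t, deriv f (t + 1) = deriv f t := by
    intro t
    rw [← deriv_comp_add_const f 1]
    congr 1; ext x; exact hper x
  -- the integrand is continuous
  have hFcont : Continuous (ZCaux.F f) := by
    have : Continuous fun t => |f t| * ((deriv f t) ^ 2 - f t * deriv (deriv f) t) /
        ((f t) ^ 2 + (deriv f t) ^ 2) ^ ((3:ℝ)/2) := by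
      apply Continuous.div
      · exact (hcont.abs.mul ((hcont'.pow 2).sub (hcont.mul hcont'')))
      · apply Continuous.rpow_const ((hcont.pow 2).add (hcont'.pow 2))
        intro t; right; norm_num
      · intro t
        exact ne_of_gt (Real.rpow_pos_of_pos (hQpos t) _)
    exact this.congr fun t => (ZCaux.F_eq f t).symm
  -- zeros are isolated
  have hiso : ∀ z, f z = 0 → ∀ᶠ u in 𝓝[≠] z, f u ≠ 0 := by
    intro z hz
    have hd : HasDerivAt f (deriv f z) z := (hfd z).hasDerivAt
    have hs := hasDerivAt_iff_tendsto_slope.mp hd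
    have hne := hs.eventually_ne (hnd z hz)
    filter_upwards [hne, self_mem_nhdsWithin] with u hu hu'
    intro hfu
    apply hu
    rw [slope_def_field, hz, hfu]
    simp
  -- the zero set on [-1,2] is finite
  have hZfin : {t : ℝ | t ∈ Set.Icc (-1:ℝ) 2 ∧ f t = 0}.Finite := by
    have hcomp : IsCompact {t : ℝ | t ∈ Set.Icc (-1:ℝ) 2 ∧ f t = 0} := by
      have : {t : ℝ | t ∈ Set.Icc (-1:ℝ) 2 ∧ f t = 0} = Set.Icc (-1:ℝ) 2 ∩ f ⁻¹' {0} := by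
        ext t; simp [Set.mem_setOf_eq]
      rw [this]
      exact isCompact_Icc.inter_right (isClosed_singleton.preimage hcont)
    apply hcomp.finite
    rw [isDiscrete_iff_discreteTopology, discreteTopology_subtype_iff]
    intro z hz
    rw [← Filter.empty_mem_iff_bot]
    have h1 : ∀ᶠ u in 𝓝[≠] z, f u ≠ 0 := hiso z hz.2
    rw [Filter.eventually_iff, mem_nhdsWithin] at h1
    obtain ⟨U, hUo, hUz, hU⟩ := h1
    rw [Filter.mem_inf_iff_superset]
    refine ⟨U ∩ {z}ᶜ, ?_, {t | t ∈ Set.Icc (-1:ℝ) 2 ∧ f t = 0}, Filter.mem_principal_self _, ?_⟩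
    · exact mem_nhdsWithin.2 ⟨U, hUo, hUz, fun x hx => hx⟩
    · rintro x ⟨⟨hxU, hxz⟩, hxs⟩
      exact (hU ⟨hxU, hxz⟩) hxs.2
  set Z : Finset ℝ := hZfin.toFinset with hZdef
  have hmemZ : ∀ z : ℝ, z ∈ Z ↔ z ∈ Set.Icc (-1:ℝ) 2 ∧ f z = 0 := by
    intro z; rw [hZdef, Set.Finite.mem_toFinset]; rfl
  -- the potential function G
  set G : ℝ → ℝ := fun u => (∑ z ∈ Z, ZCaux.w z u) - ZCaux.h f u with hGdef
  -- derivative of h at points where f ≠ 0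
  have hderivh : ∀ t, f t ≠ 0 → HasDerivAt (ZCaux.h f) (-(ZCaux.F f t)) t := by
    intro t ht
    have hfa : HasDerivAt f (deriv f t) t := (hfd t).hasDerivAt
    have hfb : HasDerivAt (deriv f) (deriv (deriv f) t) t := (hfd' t).hasDerivAt
    have hq : HasDerivAt (fun u => f u ^ 2 + deriv f u ^ 2)
        (2 * f t ^ 1 * deriv f t + 2 * deriv f t ^ 1 * deriv (deriv f) t) t :=
      (hfa.pow 2).add (hfb.pow 2)
    have hQt : (0:ℝ) < f t ^ 2 + deriv f t ^ 2 := hQpos t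
    have hS0 : Real.sqrt (f t ^ 2 + deriv f t ^ 2) ≠ 0 :=
      ne_of_gt (Real.sqrt_pos.2 hQt)
    have hsq : HasDerivAt (fun u => Real.sqrt (f u ^ 2 + deriv f u ^ 2))
        (1 / (2 * Real.sqrt (f t ^ 2 + deriv f t ^ 2)) *
          (2 * f t ^ 1 * deriv f t + 2 * deriv f t ^ 1 * deriv (deriv f) t)) t :=
      (Real.hasDerivAt_sqrt (ne_of_gt hQt)).comp t hq
    have hnum : HasDerivAt (fun u => Real.sign (f t) * deriv f u)
        (Real.sign (f t) * deriv (deriv f) t) t := hfb.const_mul _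
    have hdiv : HasDerivAt
        (fun u => Real.sign (f t) * deriv f u / Real.sqrt (f u ^ 2 + deriv f u ^ 2))
        ((Real.sign (f t) * deriv (deriv f) t * Real.sqrt (f t ^ 2 + deriv f t ^ 2) -
          Real.sign (f t) * deriv f t *
            (1 / (2 * Real.sqrt (f t ^ 2 + deriv f t ^ 2)) *
              (2 * f t ^ 1 * deriv f t + 2 * deriv f t ^ 1 * deriv (deriv f) t))) /
          Real.sqrt (f t ^ 2 + deriv f t ^ 2) ^ 2) t :=
      hnum.div hsq hS0
    have heq : ZCaux.h f =ᶠ[𝓝 t]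
        fun u => Real.sign (f t) * deriv f u / Real.sqrt (f u ^ 2 + deriv f u ^ 2) := by
      have hev : ∀ᶠ u in 𝓝 t, Real.sign (f u) = Real.sign (f t) := by
        rcases lt_trichotomy (f t) 0 with ha | ha | ha
        · have := hcont.continuousAt (x := t) |>.eventually_mem (Iio_mem_nhds ha)
          filter_upwards [this] with u hu
          rw [Real.sign_of_neg hu, Real.sign_of_neg ha]
        · exact absurd ha ht
        · have := hcont.continuousAt (x := t) |>.eventually_mem (Ioi_mem_nhds ha)
          filter_upwards [this] with u hu
          rw [Real.sign_of_pos hu, Real.sign_of_pos ha]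
      filter_upwards [hev] with u hu
      unfold ZCaux.h ZCaux.q
      rw [hu]
    rw [heq.hasDerivAt_iff]
    refine hdiv.congr_deriv (Eq.symm ?_)
    have hS2 : Real.sqrt (f t ^ 2 + deriv f t ^ 2) ^ 2 = f t ^ 2 + deriv f t ^ 2 :=
      Real.sq_sqrt hQt.le
    have hQ32 : (f t ^ 2 + deriv f t ^ 2) ^ ((3:ℝ)/2) =
        Real.sqrt (f t ^ 2 + deriv f t ^ 2) ^ 3 := by
      rw [show Real.sqrt (f t ^ 2 + deriv f t ^ 2) = (f t ^ 2 + deriv f t ^ 2) ^ ((1:ℝ)/2) from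
        Real.sqrt_eq_rpow _, ← Real.rpow_natCast ((f t ^ 2 + deriv f t ^ 2) ^ ((1:ℝ)/2)) 3,
        ← Real.rpow_mul hQt.le]
      norm_num
    unfold ZCaux.F
    rw [hQ32]
    have h3 : Real.sqrt (f t ^ 2 + deriv f t ^ 2) ^ 3 ≠ 0 := pow_ne_zero _ hS0
    field_simp
    linear_combination (-(Real.sign (f t) * deriv (deriv f) t)) * hS2
  -- G has derivative F everywhere on [0,1]
  have hG : ∀ t ∈ Set.Icc (0:ℝ) 1, HasDerivAt G (ZCaux.F f t) t := by
    intro t ht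
    rcases eq_or_ne (f t) 0 with ht0 | ht0
    · -- at a zero of f
      have htZ : t ∈ Z := (hmemZ t).2 ⟨⟨by linarith [ht.1], by linarith [ht.2]⟩, ht0⟩
      have hb0 : deriv f t ≠ 0 := hnd t ht0
      have hht : ZCaux.h f t = 0 := by
        unfold ZCaux.h; rw [ht0, Real.sign_zero]; ring
      have hF0 : ZCaux.F f t = 0 := by
        unfold ZCaux.F; rw [ht0, Real.sign_zero]; simp
      -- sign of f near t
      have hsgn : ∀ᶠ u in 𝓝[≠] t,
          Real.sign (f u) = Real.sign (u - t) * Real.sign (deriv f t) := by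
        have key : ∀ x y : ℝ, 0 < x / y → Real.sign x = Real.sign y := by
          intro x y hxy
          rcases div_pos_iff.1 hxy with ⟨hx, hy⟩ | ⟨hx, hy⟩
          · rw [Real.sign_of_pos hx, Real.sign_of_pos hy]
          · rw [Real.sign_of_neg hx, Real.sign_of_neg hy]
        have key' : ∀ x y : ℝ, x / y < 0 → Real.sign x = - Real.sign y := by
          intro x y hxy
          rcases div_neg_iff.1 hxy with ⟨hx, hy⟩ | ⟨hx, hy⟩
          · rw [Real.sign_of_pos hx, Real.sign_of_neg hy]; ring
          · rw [Real.sign_of_neg hx, Real.sign_of_pos hy]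
        have hslope := hasDerivAt_iff_tendsto_slope.mp (hfd t).hasDerivAt
        have hsl : ∀ᶠ u in 𝓝[≠] t, slope f t u = f u / (u - t) := by
          filter_upwards [] with u
          rw [slope_def_field, ht0, sub_zero]
        rcases lt_or_gt_of_ne hb0 with hbneg | hbpos
        · have hev : ∀ᶠ u in 𝓝[≠] t, slope f t u ∈ Set.Iio (0:ℝ) :=
            hslope.eventually_mem (Iio_mem_nhds hbneg)
          filter_upwards [hev, hsl] with u hu hu'
          rw [hu'] at hu
          rw [key' _ _ hu, Real.sign_of_neg hbneg]; ring
        · have hev : ∀ᶠ u in 𝓝[≠] t, slope f t u ∈ Set.Ioi (0:ℝ) :=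
            hslope.eventually_mem (Ioi_mem_nhds hbpos)
          filter_upwards [hev, hsl] with u hu hu'
          rw [hu'] at hu
          rw [key _ _ hu, Real.sign_of_pos hbpos]; ring
      -- the little-o estimate for sign (u - t) - h f u
      have hlo : (fun u => Real.sign (u - t) - ZCaux.h f u) =o[𝓝[≠] t]
          fun u => u - t := by
        have hσ2 : Real.sign (deriv f t) * Real.sign (deriv f t) = 1 := by
          rcases lt_or_gt_of_ne hb0 with hb | hb
          · rw [Real.sign_of_neg hb]; norm_num
          · rw [Real.sign_of_pos hb]; norm_num
        have hσb : Real.sign (deriv f t) * deriv f t = |deriv f t| := ZCaux.sign_mul_self _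
        have hcd : Continuous fun u => Real.sign (deriv f t) * deriv f u :=
          continuous_const.mul hcont'
        have hevpos : ∀ᶠ u in 𝓝 t, 0 < Real.sign (deriv f t) * deriv f u := by
          have := hcd.continuousAt (x := t) |>.eventually_mem
            (Ioi_mem_nhds (show (0:ℝ) < Real.sign (deriv f t) * deriv f t by
              rw [hσb]; exact abs_pos.2 hb0))
          filter_upwards [this] with u hu; exact hu
        have hident : (fun u => Real.sign (u - t) - ZCaux.h f u) =ᶠ[𝓝[≠] t]
            fun u => f u ^ 2 * (Real.sign (u - t) /
              (Real.sqrt (ZCaux.q f u) *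
                (Real.sqrt (ZCaux.q f u) + Real.sign (deriv f t) * deriv f u))) := by
          filter_upwards [hsgn, hevpos.filter_mono nhdsWithin_le_nhds] with u hu hupos
          have hS2 : Real.sqrt (ZCaux.q f u) ^ 2 = f u ^ 2 + deriv f u ^ 2 := by
            rw [Real.sq_sqrt (hQpos u).le]; rfl
          have hSu := hSpos u
          have hD : 0 < Real.sqrt (ZCaux.q f u) + Real.sign (deriv f t) * deriv f u := by
            linarith
          unfold ZCaux.h
          rw [hu]
          have hne1 : Real.sqrt (ZCaux.q f u) ≠ 0 := ne_of_gt hSu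
          have hne2 : Real.sqrt (ZCaux.q f u) + Real.sign (deriv f t) * deriv f u ≠ 0 :=
            ne_of_gt hD
          field_simp
          linear_combination Real.sign (u-t) * hS2 -
            Real.sign (u-t) * (deriv f u)^2 * hσ2
        have h0 : (fun u => f u) =O[𝓝 t] fun u => u - t := by
          have := (hfd t).hasDerivAt.hasFDerivAt.isBigO_sub
          simpa [ht0] using this
        have h1 : (fun u => f u ^ 2) =O[𝓝 t] fun u => (u - t) ^ 2 := by
          simpa [pow_two] using h0.mul h0
        have h2 : (fun u => Real.sign (u - t) /
            (Real.sqrt (ZCaux.q f u) *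
              (Real.sqrt (ZCaux.q f u) + Real.sign (deriv f t) * deriv f u))) =O[𝓝[≠] t]
            fun _ => (1:ℝ) := by
          rw [isBigO_iff]
          refine ⟨1 / deriv f t ^ 2, ?_⟩
          have hb2 : (0:ℝ) < deriv f t ^ 2 := by positivity
          have hcD : Continuous fun u => Real.sqrt (ZCaux.q f u) *
              (Real.sqrt (ZCaux.q f u) + Real.sign (deriv f t) * deriv f u) := by
            have hq : Continuous (ZCaux.q f) := (hcont.pow 2).add (hcont'.pow 2)
            exact hq.sqrt.mul (hq.sqrt.add hcd)
          have hvt : Real.sqrt (ZCaux.q f t) *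
              (Real.sqrt (ZCaux.q f t) + Real.sign (deriv f t) * deriv f t) =
              2 * deriv f t ^ 2 := by
            have hst : Real.sqrt (ZCaux.q f t) = |deriv f t| := by
              unfold ZCaux.q
              rw [ht0, show (0:ℝ)^2 + deriv f t ^2 = deriv f t^2 by ring,
                Real.sqrt_sq_eq_abs]
            rw [hst, hσb, show |deriv f t| * (|deriv f t| + |deriv f t|) =
              2 * (|deriv f t| * |deriv f t|) by ring, abs_mul_abs_self]
            ring
          have hev : ∀ᶠ u in 𝓝 t, deriv f t ^ 2 < Real.sqrt (ZCaux.q f u) *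
              (Real.sqrt (ZCaux.q f u) + Real.sign (deriv f t) * deriv f u) := by
            have := hcD.continuousAt (x := t) |>.eventually_mem (Ioi_mem_nhds
              (show deriv f t ^ 2 < Real.sqrt (ZCaux.q f t) *
                (Real.sqrt (ZCaux.q f t) + Real.sign (deriv f t) * deriv f t) by
                rw [hvt]; linarith))
            filter_upwards [this] with u hu; exact hu
          filter_upwards [hev.filter_mono nhdsWithin_le_nhds] with u hu
          simp only [Real.norm_eq_abs, norm_one, mul_one]
          rw [abs_div]
          have hDpos : 0 < Real.sqrt (ZCaux.q f u) *
              (Real.sqrt (ZCaux.q f u) + Real.sign (deriv f t) * deriv f u) :=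
            lt_trans hb2 hu
          rw [abs_of_pos hDpos]
          have h3 : |Real.sign (u - t)| ≤ 1 := by
            rcases lt_trichotomy (u - t) 0 with hx | hx | hx
            · rw [Real.sign_of_neg hx]; norm_num
            · rw [hx, Real.sign_zero]; norm_num
            · rw [Real.sign_of_pos hx]; norm_num
          exact div_le_div₀ zero_le_one h3 hb2 hu.le
        have hqd : (fun u : ℝ => (u - t) ^ 2) =o[𝓝 t] fun u => u - t := by
          rw [isLittleO_iff]
          intro c hc
          have hball : ∀ᶠ u in 𝓝 t, |u - t| ≤ c := by
            filter_upwards [Metric.ball_mem_nhds t hc] with u hu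
            rw [Metric.mem_ball, Real.dist_eq] at hu; exact hu.le
          filter_upwards [hball] with u hu
          rw [Real.norm_eq_abs, Real.norm_eq_abs, show |(u-t)^2| = |u-t| * |u-t| by
            rw [pow_two, abs_mul]]
          exact mul_le_mul_of_nonneg_right hu (abs_nonneg _)
        have hbig : (fun u => Real.sign (u - t) - ZCaux.h f u) =O[𝓝[≠] t]
            fun u => (u - t) ^ 2 := by
          refine hident.trans_isBigO ?_
          have := (h1.mono nhdsWithin_le_nhds).mul h2
          simpa using this
        exact hbig.trans_isLittleO (hqd.mono nhdsWithin_le_nhds)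
      -- eventual expression for G u - G t
      have hsum_ev : ∀ᶠ u in 𝓝 t, G u - G t = (ZCaux.w t u - 1) - ZCaux.h f u := by
        have hev : ∀ᶠ u in 𝓝 t, ∀ z ∈ Z.erase t, ZCaux.w z u = ZCaux.w z t := by
          rw [Filter.eventually_all_finset]
          intro z hz
          have hzt : z ≠ t := Finset.ne_of_mem_erase hz
          rcases lt_trichotomy t z with hlt | heq | hgt
          · filter_upwards [Iio_mem_nhds hlt] with u hu
            rw [Set.mem_Iio] at hu
            simp only [ZCaux.w, if_pos hu, if_pos hlt]
          · exact absurd heq.symm hzt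
          · filter_upwards [Ioi_mem_nhds hgt] with u hu
            rw [Set.mem_Ioi] at hu
            simp only [ZCaux.w, if_neg (not_lt.2 hu.le), if_neg (ne_of_gt hu),
              if_neg (not_lt.2 hgt.le), if_neg (ne_of_gt hgt)]
        filter_upwards [hev] with u hu
        have hsplit : ∀ v : ℝ, (∑ z ∈ Z, ZCaux.w z v) =
            ZCaux.w t v + ∑ z ∈ Z.erase t, ZCaux.w z v := by
          intro v; exact (Finset.add_sum_erase Z (fun z => ZCaux.w z v) htZ).symm
        simp only [hGdef, hsplit, Finset.sum_congr rfl hu, hht, ZCaux.w_self]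
        ring
      -- conclude
      rw [hF0, hasDerivAt_iff_isLittleO]
      simp only [smul_zero, sub_zero]
      have hev2 : ∀ᶠ u in 𝓝 t, (ZCaux.w t u - 1) - ZCaux.h f u =
          Real.sign (u - t) - ZCaux.h f u ∨ u = t := by
        filter_upwards [] with u
        rcases lt_trichotomy u t with hx | hx | hx
        · left
          rw [show ZCaux.w t u = 0 by simp only [ZCaux.w, if_pos hx],
            Real.sign_of_neg (by linarith : u - t < 0)]
          ring
        · right; exact hx
        · left
          rw [show ZCaux.w t u = 2 by
              simp only [ZCaux.w, if_neg (not_lt.2 hx.le), if_neg (ne_of_gt hx)],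
            Real.sign_of_pos (by linarith : 0 < u - t)]
          ring
      have hfull : (fun u => G u - G t) =o[𝓝 t] fun u => u - t := by
        rw [← nhdsNE_sup_pure t]
        apply IsLittleO.sup
        · have he1 : (fun u => G u - G t) =ᶠ[𝓝[≠] t]
              fun u => Real.sign (u - t) - ZCaux.h f u := by
            filter_upwards [hsum_ev.filter_mono nhdsWithin_le_nhds,
              hev2.filter_mono nhdsWithin_le_nhds, self_mem_nhdsWithin] with u hu1 hu2 hu3
            rcases hu2 with hu2 | hu2
            · rw [hu1, hu2]
            · exact absurd hu2 hu3
          exact hlo.congr' he1.symm EventuallyEq.rfl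
        · rw [isLittleO_pure]
          simp
      exact hfull.congr' EventuallyEq.rfl EventuallyEq.rfl
    · -- f t ≠ 0
      have hsum : HasDerivAt (fun u => ∑ z ∈ Z, ZCaux.w z u) 0 t := by
        have hev : (fun u => ∑ z ∈ Z, ZCaux.w z u) =ᶠ[𝓝 t]
            fun _ => ∑ z ∈ Z, ZCaux.w z t := by
          have hev : ∀ᶠ u in 𝓝 t, ∀ z ∈ Z, ZCaux.w z u = ZCaux.w z t := by
            rw [Filter.eventually_all_finset]
            intro z hz
            have hzt : z ≠ t := by
              intro hzz; rw [hzz] at hz; exact ht0 ((hmemZ t).1 hz).2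
            rcases lt_trichotomy t z with hlt | heq | hgt
            · filter_upwards [Iio_mem_nhds hlt] with u hu
              rw [Set.mem_Iio] at hu
              simp only [ZCaux.w, if_pos hu, if_pos hlt]
            · exact absurd heq.symm hzt
            · filter_upwards [Ioi_mem_nhds hgt] with u hu
              rw [Set.mem_Ioi] at hu
              simp only [ZCaux.w, if_neg (not_lt.2 hu.le), if_neg (ne_of_gt hu),
                if_neg (not_lt.2 hgt.le), if_neg (ne_of_gt hgt)]
          filter_upwards [hev] with u hu
          exact Finset.sum_congr rfl hu
        rw [hev.hasDerivAt_iff]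
        exact hasDerivAt_const t _
      have := hsum.sub (hderivh t ht0)
      simp only [hGdef]
      refine this.congr_deriv (Eq.symm ?_)
      ring
  -- FTC
  have hInt : IntervalIntegrable (ZCaux.F f) MeasureTheory.volume 0 1 :=
    hFcont.intervalIntegrable 0 1
  have hFTC : ∫ u in (0:ℝ)..1, ZCaux.F f u = G 1 - G 0 := by
    apply intervalIntegral.integral_eq_sub_of_hasDerivAt
    · intro x hx
      rw [Set.uIcc_of_le zero_le_one] at hx
      exact hG x hx
    · exact hInt
  -- counting
  have hSfin : {t : ℝ | t ∈ Set.Ico (0:ℝ) 1 ∧ f t = 0}.Finite := by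
    apply hZfin.subset
    rintro x ⟨hx, hfx⟩
    exact ⟨⟨by linarith [hx.1], by linarith [hx.2]⟩, hfx⟩
  have hh01 : ZCaux.h f 1 = ZCaux.h f 0 := by
    unfold ZCaux.h ZCaux.q
    rw [show f 1 = f 0 from by simpa using hper 0,
      show deriv f 1 = deriv f 0 from by simpa using hper' 0]
  have hZ01 : ((1:ℝ) ∈ Z) ↔ ((0:ℝ) ∈ Z) := by
    rw [hmemZ, hmemZ, show f 1 = f 0 from by simpa using hper 0]
    simp only [Set.mem_Icc]
    constructor
    · rintro ⟨_, hf0⟩; exact ⟨⟨by norm_num, by norm_num⟩, hf0⟩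
    · rintro ⟨_, hf0⟩; exact ⟨⟨by norm_num, by norm_num⟩, hf0⟩
  have hfilter : Z.filter (fun z => z ∈ Set.Ico (0:ℝ) 1) = hSfin.toFinset := by
    ext z
    simp only [Finset.mem_filter, hmemZ, Set.Finite.mem_toFinset, Set.mem_setOf_eq]
    constructor
    · rintro ⟨⟨_, hz0⟩, hzI⟩; exact ⟨hzI, hz0⟩
    · rintro ⟨hzI, hz0⟩
      exact ⟨⟨⟨by linarith [hzI.1], by linarith [hzI.2]⟩, hz0⟩, hzI⟩
  have hsumZ : ∑ z ∈ Z, (ZCaux.w z 1 - ZCaux.w z 0) =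
      2 * (hSfin.toFinset.card : ℝ) := by
    rw [Finset.sum_congr rfl (fun z _ => ZCaux.w_sub z)]
    rw [Finset.sum_sub_distrib, Finset.sum_add_distrib]
    rw [Finset.sum_ite_eq' Z (1:ℝ) (fun _ => (1:ℝ)),
      Finset.sum_ite_eq' Z (0:ℝ) (fun _ => (1:ℝ))]
    rw [if_congr hZ01 rfl rfl]
    have : ∑ z ∈ Z, (if z ∈ Set.Ico (0:ℝ) 1 then (2:ℝ) else 0) =
        2 * (hSfin.toFinset.card : ℝ) := by
      rw [← Finset.sum_filter, Finset.sum_const, hfilter, nsmul_eq_mul]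
      ring
    rw [this]
    ring
  have hG10 : G 1 - G 0 = 2 * (hSfin.toFinset.card : ℝ) := by
    simp only [hGdef]
    rw [← hsumZ, hh01, Finset.sum_sub_distrib]
    ring
  rw [Nat.card_eq_card_finite_toFinset hSfin]
  have hintegrand : (∫ t in (0:ℝ)..1,
      Real.sign (f t) *
        (f t * (deriv f t) ^ 2 + deriv (deriv f) t * (deriv f t) ^ 2 -
          ((f t) ^ 2 + (deriv f t) ^ 2) * deriv (deriv f) t) /
        ((f t) ^ 2 + (deriv f t) ^ 2) ^ ((3:ℝ)/2)) = ∫ u in (0:ℝ)..1, ZCaux.F f u := rfl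
  rw [hintegrand, hFTC, hG10]
  ring
end

section
/- One-dimensional arctan zero-counting formula: Let f ∈ C²(ℝ/ℤ,ℝ) with f(t)=0 ⟹ f'(t)≠0. Then #{t ∈ ℝ/ℤ : f(t)=0} = (1/π) ∫_{ℝ/ℤ} (f'(t)² − f(t) f''(t)) / (f(t)² + f'(t)²) dt. -/
open Real Filter Topology Set MeasureTheory intervalIntegral Function

namespace OneDim13

noncomputable def G (f : ℝ → ℝ) (t : ℝ) : ℝ :=
  ((deriv f t) ^ 2 - f t * deriv (deriv f) t) / ((f t) ^ 2 + (deriv f t) ^ 2)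

variable {f : ℝ → ℝ}

lemma diff1 (hf : ContDiff ℝ 2 f) : Differentiable ℝ f := hf.differentiable (by norm_num)

lemma cd1 (hf : ContDiff ℝ 2 f) : ContDiff ℝ 1 (deriv f) := by
  rw [show (2 : WithTop ℕ∞) = 1 + 1 from rfl, contDiff_succ_iff_deriv] at hf
  exact hf.2.2

lemma diff2 (hf : ContDiff ℝ 2 f) : Differentiable ℝ (deriv f) :=
  (contDiff_one_iff_deriv.1 (cd1 hf)).1

lemma cont2 (hf : ContDiff ℝ 2 f) : Continuous (deriv (deriv f)) :=
  (contDiff_one_iff_deriv.1 (cd1 hf)).2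

lemma denom_pos (hnd : ∀ t, f t = 0 → deriv f t ≠ 0) (t : ℝ) :
    0 < (f t) ^ 2 + (deriv f t) ^ 2 := by
  rcases eq_or_ne (f t) 0 with h | h
  · nlinarith [sq_nonneg (f t), sq_pos_of_ne_zero (hnd t h)]
  · nlinarith [sq_nonneg (deriv f t), sq_pos_of_ne_zero h]

lemma G_cont (hf : ContDiff ℝ 2 f) (hnd : ∀ t, f t = 0 → deriv f t ≠ 0) :
    Continuous (G f) := by
  apply Continuous.div
  · exact ((diff2 hf).continuous.pow 2).sub ((diff1 hf).continuous.mul (cont2 hf))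
  · exact ((diff1 hf).continuous.pow 2).add ((diff2 hf).continuous.pow 2)
  · exact fun t => (denom_pos hnd t).ne'

lemma per_deriv (hper : Periodic f 1) : Periodic (deriv f) 1 := by
  intro x
  rw [← deriv_comp_add_const (f := f) (a := (1:ℝ)), hper.funext]


lemma eventually_ne (hf : ContDiff ℝ 2 f) {c : ℝ} (hc : f c = 0) (hc' : deriv f c ≠ 0) :
    ∀ᶠ x in 𝓝[≠] c, f x ≠ 0 := by
  have hd : HasDerivAt f (deriv f c) c := (diff1 hf c).hasDerivAt
  have h2 : ∀ᶠ x in 𝓝[≠] c, slope f c x ≠ 0 :=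
    (hasDerivAt_iff_tendsto_slope.1 hd).eventually_ne hc'
  filter_upwards [h2] with x hx hfx
  exact hx (by simp [slope_def_field, hc, hfx])

lemma finite_zeros (hf : ContDiff ℝ 2 f) (hnd : ∀ t, f t = 0 → deriv f t ≠ 0) (a b : ℝ) :
    {t : ℝ | t ∈ Icc a b ∧ f t = 0}.Finite := by
  have hclosed : IsClosed {t : ℝ | t ∈ Icc a b ∧ f t = 0} :=
    IsClosed.inter isClosed_Icc (isClosed_singleton.preimage (diff1 hf).continuous)
  have hcomp : IsCompact {t : ℝ | t ∈ Icc a b ∧ f t = 0} :=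
    IsCompact.of_isClosed_subset isCompact_Icc hclosed (fun t ht => ht.1)
  refine hcomp.finite ?_
  rw [isDiscrete_iff_nhdsNE]
  intro x hx
  rw [inf_principal_eq_bot]
  filter_upwards [eventually_ne hf hx.2 (hnd x hx.2)] with y hy hyS
  exact hy hyS.2

lemma tendsto_arctan_right (hf : ContDiff ℝ 2 f) (hnd : ∀ t, f t = 0 → deriv f t ≠ 0)
    {a : ℝ} (ha : f a = 0) :
    Tendsto (fun x => arctan (deriv f x / f x)) (𝓝[>] a) (𝓝 (π / 2)) := by
  have ha' := hnd a ha
  have hda : HasDerivAt f (deriv f a) a := (diff1 hf a).hasDerivAt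
  have hslope : Tendsto (slope f a) (𝓝[≠] a) (𝓝 (deriv f a)) :=
    hasDerivAt_iff_tendsto_slope.1 hda
  have hc : Tendsto (deriv f) (𝓝[≠] a) (𝓝 (deriv f a)) :=
    ((diff2 hf).continuous.tendsto a).mono_left nhdsWithin_le_nhds
  have h1 : Tendsto (fun x => deriv f x / slope f a x) (𝓝[≠] a) (𝓝 1) := by
    have := hc.div hslope ha'
    rw [div_self ha'] at this
    exact this
  have hmono : (𝓝[>] a : Filter ℝ) ≤ 𝓝[≠] a :=
    nhdsWithin_mono a (fun x hx => ne_of_gt hx)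
  have h2 : Tendsto (fun x : ℝ => (x - a)⁻¹) (𝓝[>] a) atTop := by
    apply tendsto_inv_nhdsGT_zero.comp
    rw [tendsto_nhdsWithin_iff]
    constructor
    · have : Tendsto (fun x : ℝ => x - a) (𝓝 a) (𝓝 (a - a)) :=
        (continuous_id.sub continuous_const).tendsto a
      simpa using this.mono_left nhdsWithin_le_nhds
    · filter_upwards [self_mem_nhdsWithin] with x hx
      exact sub_pos.2 (show a < x from hx)
  have h3 : Tendsto (fun x => (deriv f x / slope f a x) * (x - a)⁻¹) (𝓝[>] a) atTop :=
    Filter.Tendsto.pos_mul_atTop one_pos (h1.mono_left hmono) h2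
  have key : Tendsto (fun x => deriv f x / f x) (𝓝[>] a) atTop := by
    refine h3.congr' ?_
    filter_upwards [(eventually_ne hf ha ha').filter_mono hmono, self_mem_nhdsWithin]
      with x hfx hx
    have hxa : x - a ≠ 0 := sub_ne_zero.2 (ne_of_gt hx)
    rw [slope_def_field, ha, sub_zero]
    field_simp
  exact (tendsto_arctan_atTop.comp key).mono_right nhdsWithin_le_nhds

lemma tendsto_arctan_left (hf : ContDiff ℝ 2 f) (hnd : ∀ t, f t = 0 → deriv f t ≠ 0)
    {b : ℝ} (hb : f b = 0) :
    Tendsto (fun x => arctan (deriv f x / f x)) (𝓝[<] b) (𝓝 (-(π / 2))) := by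
  have hb' := hnd b hb
  have hdb : HasDerivAt f (deriv f b) b := (diff1 hf b).hasDerivAt
  have hslope : Tendsto (slope f b) (𝓝[≠] b) (𝓝 (deriv f b)) :=
    hasDerivAt_iff_tendsto_slope.1 hdb
  have hc : Tendsto (deriv f) (𝓝[≠] b) (𝓝 (deriv f b)) :=
    ((diff2 hf).continuous.tendsto b).mono_left nhdsWithin_le_nhds
  have h1 : Tendsto (fun x => deriv f x / slope f b x) (𝓝[≠] b) (𝓝 1) := by
    have := hc.div hslope hb'
    rw [div_self hb'] at this
    exact this
  have hmono : (𝓝[<] b : Filter ℝ) ≤ 𝓝[≠] b :=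
    nhdsWithin_mono b (fun x hx => ne_of_lt hx)
  have h2 : Tendsto (fun x : ℝ => (x - b)⁻¹) (𝓝[<] b) atBot := by
    have h2' : Tendsto (fun x : ℝ => (b - x)⁻¹) (𝓝[<] b) atTop := by
      apply tendsto_inv_nhdsGT_zero.comp
      rw [tendsto_nhdsWithin_iff]
      constructor
      · have : Tendsto (fun x : ℝ => b - x) (𝓝 b) (𝓝 (b - b)) :=
          (continuous_const.sub continuous_id).tendsto b
        simpa using this.mono_left nhdsWithin_le_nhds
      · filter_upwards [self_mem_nhdsWithin] with x hx
        simpa using hx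
    have := (tendsto_neg_atTop_atBot).comp h2'
    refine this.congr (fun x => ?_)
    simp [← inv_neg, neg_sub]
  have h3 : Tendsto (fun x => (deriv f x / slope f b x) * (x - b)⁻¹) (𝓝[<] b) atBot :=
    Filter.Tendsto.pos_mul_atBot one_pos (h1.mono_left hmono) h2
  have key : Tendsto (fun x => deriv f x / f x) (𝓝[<] b) atBot := by
    refine h3.congr' ?_
    filter_upwards [(eventually_ne hf hb hb').filter_mono hmono, self_mem_nhdsWithin]
      with x hfx hx
    have hxb : x - b ≠ 0 := sub_ne_zero.2 (ne_of_lt hx)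
    rw [slope_def_field, hb, sub_zero]
    field_simp
  exact (tendsto_arctan_atBot.comp key).mono_right nhdsWithin_le_nhds

lemma hasDerivAt_F (hf : ContDiff ℝ 2 f) (hnd : ∀ t, f t = 0 → deriv f t ≠ 0)
    {t : ℝ} (ht : f t ≠ 0) :
    HasDerivAt (fun x => -arctan (deriv f x / f x)) (G f t) t := by
  have hq : HasDerivAt (fun x => deriv f x / f x)
      ((deriv (deriv f) t * f t - deriv f t * deriv f t) / (f t) ^ 2) t :=
    ((diff2 hf t).hasDerivAt).div ((diff1 hf t).hasDerivAt) ht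
  have := (hq.arctan).neg
  refine this.congr_deriv ?_
  have hd := (denom_pos hnd t).ne'
  rw [G]
  field_simp
  ring

lemma base_integral (hf : ContDiff ℝ 2 f) (hnd : ∀ t, f t = 0 → deriv f t ≠ 0)
    {a b : ℝ} (hab : a < b) (ha : f a = 0) (hb : f b = 0)
    (hno : ∀ x ∈ Ioo a b, f x ≠ 0) : ∫ t in a..b, G f t = π := by
  have h := intervalIntegral.integral_eq_sub_of_hasDerivAt_of_tendsto
    (f := fun x => -arctan (deriv f x / f x)) (f' := G f) hab
    (fun x hx => hasDerivAt_F hf hnd (hno x hx))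
    ((G_cont hf hnd).intervalIntegrable a b)
    ((tendsto_arctan_right hf hnd ha).neg)
    ((tendsto_arctan_left hf hnd hb).neg)
  rw [h]; ring

lemma key_induction (hf : ContDiff ℝ 2 f) (hnd : ∀ t, f t = 0 → deriv f t ≠ 0) :
    ∀ n : ℕ, ∀ a b : ℝ, a < b → f a = 0 → f b = 0 →
    {t : ℝ | t ∈ Ioo a b ∧ f t = 0}.ncard = n →
    ∫ t in a..b, G f t = π * ({t : ℝ | t ∈ Ico a b ∧ f t = 0}.ncard : ℝ) := by
  intro n
  induction n using Nat.strong_induction_on with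
  | _ n ih =>
    intro a b hab ha hb hcard
    by_cases hz : ∃ c, c ∈ Ioo a b ∧ f c = 0
    · obtain ⟨c, hc, hfc⟩ := hz
      have hfinab : Set.Finite {t : ℝ | t ∈ Ioo a b ∧ f t = 0} :=
        (finite_zeros hf hnd a b).subset (fun t ht => ⟨Ioo_subset_Icc_self ht.1, ht.2⟩)
      have hsub1 : {t : ℝ | t ∈ Ioo a c ∧ f t = 0} ⊆ {t : ℝ | t ∈ Ioo a b ∧ f t = 0} \ {c} :=
        fun t ht => ⟨⟨⟨ht.1.1, ht.1.2.trans hc.2⟩, ht.2⟩, by simpa using ne_of_lt ht.1.2⟩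
      have hsub2 : {t : ℝ | t ∈ Ioo c b ∧ f t = 0} ⊆ {t : ℝ | t ∈ Ioo a b ∧ f t = 0} \ {c} :=
        fun t ht => ⟨⟨⟨hc.1.trans ht.1.1, ht.1.2⟩, ht.2⟩, by simpa using ne_of_gt ht.1.1⟩
      have hssub : {t : ℝ | t ∈ Ioo a b ∧ f t = 0} \ {c} ⊂ {t : ℝ | t ∈ Ioo a b ∧ f t = 0} :=
        sdiff_singleton_ssubset.2 ⟨hc, hfc⟩
      have hltd : ({t : ℝ | t ∈ Ioo a b ∧ f t = 0} \ {c}).ncard < n :=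
        hcard ▸ Set.ncard_lt_ncard hssub hfinab
      have hlt1 : {t : ℝ | t ∈ Ioo a c ∧ f t = 0}.ncard < n :=
        lt_of_le_of_lt (Set.ncard_le_ncard hsub1 hfinab.diff) hltd
      have hlt2 : {t : ℝ | t ∈ Ioo c b ∧ f t = 0}.ncard < n :=
        lt_of_le_of_lt (Set.ncard_le_ncard hsub2 hfinab.diff) hltd
      have ih1 := ih _ hlt1 a c hc.1 ha hfc rfl
      have ih2 := ih _ hlt2 c b hc.2 hfc hb rfl
      have hint : ∀ u v : ℝ, IntervalIntegrable (G f) volume u v :=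
        fun u v => (G_cont hf hnd).intervalIntegrable u v
      have hIco : {t : ℝ | t ∈ Ico a b ∧ f t = 0} =
          {t : ℝ | t ∈ Ico a c ∧ f t = 0} ∪ {t : ℝ | t ∈ Ico c b ∧ f t = 0} := by
        ext t
        simp only [mem_setOf_eq, mem_union, mem_Ico]
        constructor
        · rintro ⟨⟨h1, h2⟩, h3⟩
          rcases lt_or_ge t c with h | h
          · exact Or.inl ⟨⟨h1, h⟩, h3⟩
          · exact Or.inr ⟨⟨h, h2⟩, h3⟩
        · rintro (⟨⟨h1, h2⟩, h3⟩ | ⟨⟨h1, h2⟩, h3⟩)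
          · exact ⟨⟨h1, h2.trans hc.2⟩, h3⟩
          · exact ⟨⟨(hc.1.le).trans h1, h2⟩, h3⟩
      have hdisj : Disjoint {t : ℝ | t ∈ Ico a c ∧ f t = 0} {t : ℝ | t ∈ Ico c b ∧ f t = 0} := by
        rw [Set.disjoint_left]
        rintro t ⟨⟨_, h2⟩, _⟩ ⟨⟨h1, _⟩, _⟩
        exact absurd h1 (not_le.2 h2)
      have hfin1 : Set.Finite {t : ℝ | t ∈ Ico a c ∧ f t = 0} :=
        (finite_zeros hf hnd a c).subset (fun t ht => ⟨Ico_subset_Icc_self ht.1, ht.2⟩)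
      have hfin2 : Set.Finite {t : ℝ | t ∈ Ico c b ∧ f t = 0} :=
        (finite_zeros hf hnd c b).subset (fun t ht => ⟨Ico_subset_Icc_self ht.1, ht.2⟩)
      rw [← integral_add_adjacent_intervals (hint a c) (hint c b), ih1, ih2, hIco,
        Set.ncard_union_eq hdisj hfin1 hfin2]
      push_cast
      ring
    · push_neg at hz
      have hset : {t : ℝ | t ∈ Ico a b ∧ f t = 0} = {a} := by
        ext t
        simp only [mem_setOf_eq, mem_singleton_iff, mem_Ico]
        constructor
        · rintro ⟨⟨h1, h2⟩, h3⟩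
          by_contra hne
          exact hz t ⟨lt_of_le_of_ne h1 (Ne.symm hne), h2⟩ h3
        · rintro rfl
          exact ⟨⟨le_refl _, hab⟩, ha⟩
      rw [hset, base_integral hf hnd hab ha hb hz]
      simp

lemma count_shift (hper : Periodic f 1) (a : ℝ) :
    {t : ℝ | t ∈ Ico a (a + 1) ∧ f t = 0}.ncard = {t : ℝ | t ∈ Ico (0:ℝ) 1 ∧ f t = 0}.ncard := by
  have hperi : ∀ (x : ℝ) (n : ℤ), f (x + n) = f x := by
    intro x n
    have := hper.sub_int_mul_eq (x := x) (n := -n)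
    simpa using this
  have hinj : Set.InjOn Int.fract {t : ℝ | t ∈ Ico a (a + 1) ∧ f t = 0} := by
    rintro x ⟨hx, _⟩ y ⟨hy, _⟩ hxy
    have hd : x - y = ((⌊x⌋ - ⌊y⌋ : ℤ) : ℝ) := by
      rw [Int.fract, Int.fract] at hxy
      push_cast
      linarith
    have habs : |x - y| < 1 := by
      rw [abs_lt]
      obtain ⟨hx1, hx2⟩ := hx
      obtain ⟨hy1, hy2⟩ := hy
      constructor <;> linarith
    have h0 : (⌊x⌋ - ⌊y⌋ : ℤ) = 0 := by
      have h1 : |((⌊x⌋ - ⌊y⌋ : ℤ) : ℝ)| < 1 := hd ▸ habs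
      have h2 : |(⌊x⌋ - ⌊y⌋ : ℤ)| < 1 := by exact_mod_cast h1
      rw [abs_lt] at h2
      omega
    have : x - y = 0 := by rw [hd, h0]; simp
    linarith
  rw [← Set.ncard_image_of_injOn hinj]
  congr 1
  ext y
  simp only [mem_image, mem_setOf_eq, mem_Ico]
  constructor
  · rintro ⟨x, ⟨hx, hfx⟩, rfl⟩
    refine ⟨⟨Int.fract_nonneg x, Int.fract_lt_one x⟩, ?_⟩
    have : f (Int.fract x) = f x := by
      rw [Int.fract, sub_eq_add_neg, ← Int.cast_neg]
      exact hperi x (-⌊x⌋)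
    rw [this]; exact hfx
  · rintro ⟨⟨hy0, hy1⟩, hfy⟩
    refine ⟨y + ⌈a - y⌉, ⟨⟨?_, ?_⟩, ?_⟩, ?_⟩
    · have := Int.le_ceil (a - y); linarith
    · have := Int.ceil_lt_add_one (a - y); linarith
    · rw [hperi y ⌈a - y⌉]; exact hfy
    · rw [Int.fract_add_intCast, Int.fract_eq_self.2 ⟨hy0, hy1⟩]

end OneDim13

/-- One-dimensional arctan zero-counting formula on the circle `ℝ/ℤ`:
`#zeros = (1/π) ∫₀¹ (f'² − f f'')/(f² + f'²)`. -/
theorem one_dim_arctan_formula (f : ℝ → ℝ) (hper : Function.Periodic f 1)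
    (hf : ContDiff ℝ 2 f) (hnd : ∀ t, f t = 0 → deriv f t ≠ 0) :
    (Nat.card {t : ℝ | t ∈ Set.Ico (0:ℝ) 1 ∧ f t = 0} : ℝ) =
      (1/Real.pi) * ∫ t in (0:ℝ)..1,
        ((deriv f t) ^ 2 - f t * deriv (deriv f) t) /
          ((f t) ^ 2 + (deriv f t) ^ 2) := by
  classical
  have hGper : Function.Periodic (OneDim13.G f) 1 := by
    intro x
    have h1 : deriv f (x + 1) = deriv f x := OneDim13.per_deriv hper x
    have h2 : deriv (deriv f) (x + 1) = deriv (deriv f) x :=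
      OneDim13.per_deriv (OneDim13.per_deriv hper) x
    simp only [OneDim13.G, hper x, h1, h2]
  have hEq : (∫ t in (0:ℝ)..1,
      ((deriv f t) ^ 2 - f t * deriv (deriv f) t) / ((f t) ^ 2 + (deriv f t) ^ 2))
      = ∫ t in (0:ℝ)..1, OneDim13.G f t := rfl
  rw [Nat.card_coe_set_eq, hEq]
  by_cases hz : ∃ t₀, t₀ ∈ Set.Ico (0:ℝ) 1 ∧ f t₀ = 0
  · obtain ⟨t₀, ht₀, hft₀⟩ := hz
    have hshift := hGper.intervalIntegral_add_eq t₀ 0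
    have hsh2 : (∫ t in (0:ℝ)..1, OneDim13.G f t) = ∫ t in t₀..(t₀ + 1), OneDim13.G f t := by
      simpa using hshift.symm
    have hb : f (t₀ + 1) = 0 := by rw [hper t₀]; exact hft₀
    have hkey := OneDim13.key_induction hf hnd _ t₀ (t₀ + 1) (by linarith) hft₀ hb rfl
    have hcount := OneDim13.count_shift hper t₀
    rw [hsh2, hkey, hcount, one_div, inv_mul_cancel_left₀ Real.pi_ne_zero]
  · push_neg at hz
    have hno : ∀ t : ℝ, f t ≠ 0 := by
      intro t ht
      have hft : f (Int.fract t) = f t := by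
        rw [Int.fract]
        simpa using hper.sub_int_mul_eq (x := t) (n := ⌊t⌋)
      exact hz (Int.fract t) ⟨Int.fract_nonneg t, Int.fract_lt_one t⟩ (hft.trans ht)
    have hFTC := intervalIntegral.integral_eq_sub_of_hasDerivAt (a := (0:ℝ)) (b := 1)
      (f := fun x => -Real.arctan (deriv f x / f x)) (f' := OneDim13.G f)
      (fun x _ => OneDim13.hasDerivAt_F hf hnd (hno x))
      ((OneDim13.G_cont hf hnd).intervalIntegrable 0 1)
    have hset : {t : ℝ | t ∈ Set.Ico (0:ℝ) 1 ∧ f t = 0} = ∅ := by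
      ext t
      simp only [Set.mem_setOf_eq, Set.mem_empty_iff_false, iff_false, not_and]
      exact fun _ => hno t
    have hd10 : deriv f 1 = deriv f 0 := by simpa using OneDim13.per_deriv hper 0
    have hf10 : f 1 = f 0 := by simpa using hper 0
    rw [hFTC, hset]
    simp [Set.ncard_empty, hf10, hd10]
end
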